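/- Let b, c : ℕ → ℝ be arbitrary sequences and write c′ for the extension of c to ℤ vanishing on negative integers. Fix k, n ∈ ℕ and g : Fin k → ℕ. For a finpartition p of the full finset of Fin k, a function m from the parts of p to {1, …, n}, a finpartition ρ of the finset p.parts, and a part B of ρ, write Σm := ∑_{q ∈ p.parts} m q, let δ_B := 1 if m is constant on B and 0 otherwise, and in the constant case let w_B be the common value of m on B. Then ∑_p ∑_{m : p.parts → {1,…,n}} c′(n − Σm) · ∏_{q ∈ p.parts} (b (m q)) · (m q)^(∑_{i ∈ q} g i) = ∑_p ∑_{m : p.parts → {1,…,n}} ( ∑_ρ c′(n − ∑_{B ∈ ρ.parts} w_B) · ∏_{B ∈ ρ.parts} δ_B · (b w_B) · Nat.descFactorial w_B (B.card) ) · ∏_{q ∈ p.parts} ((m q : ℝ))^((∑_{i ∈ q} g i : ℤ) − q.card), where the outer sums run over all finpartitions p of the full finset of Fin k, ρ runs over all finpartitions of the finset p.parts, and the last product uses integer powers (the exponent may be negative; m q ≥ 1). -/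

import Mathlib

open Finset

/-- Extend a function `m` defined on the parts of a finpartition `p` of `Fin k`, with values
in `{1, …, n}`, to all finsets of `Fin k` (by `0` off the parts). -/
def mval {k n : ℕ} (p : Finpartition (Finset.univ : Finset (Fin k)))
    (m : {q // q ∈ p.parts} → {v : ℕ // v ∈ Finset.Icc 1 n}) (t : Finset (Fin k)) : ℕ :=
  if h : t ∈ p.parts then (m ⟨t, h⟩ : ℕ) else 0

/-!
Counting maps `A → Fin x` by their fibres gives `x ^ #A = ∑_σ x.descFactorial #σ.parts`, the sum
running over the partitions `σ` of `A`. Expanding each factor `(m q) ^ (∑ i ∈ q, g i)` in this way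
turns the connected-sum side into a sum over triples `(Q, σ, M)`: a partition `Q`, a partition of
each part of `Q`, and values `M` on the parts of `Q`. Conversely, merging the blocks of a partition
`ρ` of `p.parts` is a bijection `(p, ρ) ↦ (Q, σ)`, and on the ensemble side only the `m` constant
on every block of `ρ` contribute; these are the `M` on the parts of `Q`, with matching summands.
-/

namespace Finpartition

section DistribLattice

variable {α : Type*} [DistribLattice α] [OrderBot α] [DecidableEq α] {a b : α}

theorem restrict_parts_of_subset (P : Finpartition a) {B : Finset α} (hB : B ⊆ P.parts)
    (hBb : B.sup id = b) (h : b ≤ a) : (P.restrict h).parts = B := by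
  subst hBb
  ext q
  simp only [restrict, mem_erase, mem_image]
  constructor
  · rintro ⟨hq, q', hq', rfl⟩
    by_cases hq'B : q' ∈ B
    · have hle : q' ≤ B.sup id := le_sup (f := id) hq'B
      rwa [inf_eq_left.2 hle]
    · exact absurd (disjoint_iff.1 (P.supIndep hB hq' hq'B)) hq
  · intro hq
    have hle : q ≤ B.sup id := le_sup (f := id) hq
    exact ⟨P.ne_bot (hB hq), q, hB hq, inf_eq_left.2 hle⟩

section Fuse

variable (P : Finpartition a) (ρ : Finpartition P.parts)

theorem disjoint_sup_id_of_mem_parts {B B' : Finset α} (hB : B ∈ ρ.parts) (hB' : B' ∈ ρ.parts)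
    (hne : B ≠ B') : Disjoint (B.sup id) (B'.sup id) :=
  Finset.disjoint_sup_left.2 fun _ hq =>
    P.supIndep (ρ.le hB') (ρ.le hB hq) fun hq' => hne (ρ.eq_of_mem_parts hB hB' hq hq')

theorem sup_id_ne_bot {B : Finset α} (hB : B ∈ ρ.parts) : B.sup id ≠ ⊥ := by
  obtain ⟨q, hq⟩ := ρ.nonempty_of_mem_parts hB
  exact fun h => P.ne_bot (ρ.le hB hq) ((Finset.sup_eq_bot_iff _ _).1 h q hq)

theorem sup_id_injOn : Set.InjOn (·.sup id) (ρ.parts : Set (Finset α)) := by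
  intro B hB B' hB' h
  by_contra hne
  exact sup_id_ne_bot P ρ hB' <| (disjoint_sup_id_of_mem_parts P ρ hB hB' hne).eq_bot_of_ge
    (le_of_eq h.symm)

def fuse : Finpartition a where
  parts := ρ.parts.image (·.sup id)
  supIndep := by
    rw [Finset.supIndep_iff_pairwiseDisjoint]
    rintro _ hA _ hA' hne
    simp only [coe_image, Set.mem_image, mem_coe] at hA hA'
    obtain ⟨B, hB, rfl⟩ := hA
    obtain ⟨B', hB', rfl⟩ := hA'
    exact disjoint_sup_id_of_mem_parts P ρ hB hB' fun h => hne (h ▸ rfl)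
  sup_parts := by
    simp only [sup_image, Function.comp_def, id_eq]
    rw [← sup_biUnion, ← sup_eq_biUnion]
    exact (congrArg (·.sup id) ρ.sup_parts).trans P.sup_parts
  bot_notMem := by
    simp only [mem_image, not_exists, not_and]
    exact fun B hB => sup_id_ne_bot P ρ hB

theorem mem_fuse_parts {A : α} : A ∈ (P.fuse ρ).parts ↔ ∃ B ∈ ρ.parts, B.sup id = A :=
  mem_image

noncomputable def fusePartsEquiv : ρ.parts ≃ (P.fuse ρ).parts :=
  Equiv.ofBijective (fun B => ⟨B.1.sup id, mem_image_of_mem _ B.2⟩)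
    ⟨fun B B' h => Subtype.ext (sup_id_injOn P ρ B.2 B'.2 (congrArg Subtype.val h)), by
      rintro ⟨A, hA⟩
      obtain ⟨B, hB, rfl⟩ := (mem_fuse_parts P ρ).1 hA
      exact ⟨⟨B, hB⟩, rfl⟩⟩

end Fuse

section Bind

variable (Q : Finpartition a) (σ : ∀ A : Q.parts, Finpartition A.1)

omit [DecidableEq α] in
theorem disjoint_parts_of_ne {A A' : Q.parts} (hne : A ≠ A') :
    Disjoint (σ A).parts (σ A').parts := by
  refine Finset.disjoint_left.2 fun q hq hq' => (σ A).ne_bot hq ?_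
  exact le_bot_iff.1 <|
    Q.disjoint A.2 A'.2 (Subtype.coe_ne_coe.2 hne) ((σ A).le hq) ((σ A').le hq')

def bindBlocks : Finpartition (Q.bind fun A hA => σ ⟨A, hA⟩).parts where
  parts := Q.parts.attach.image fun A => (σ A).parts
  supIndep := by
    rw [Finset.supIndep_iff_pairwiseDisjoint]
    rintro _ hB _ hB' hne
    simp only [coe_image, Set.mem_image, mem_coe] at hB hB'
    obtain ⟨A, -, rfl⟩ := hB
    obtain ⟨A', -, rfl⟩ := hB'
    exact disjoint_parts_of_ne Q σ fun h => hne (h ▸ rfl)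
  sup_parts := by
    rw [sup_image, bind_parts, sup_eq_biUnion]
    rfl
  bot_notMem := by
    simp only [bot_eq_empty, mem_image, not_exists, not_and]
    exact fun A _ h => Q.ne_bot A.2 (parts_eq_empty_iff.1 h)

theorem fuse_bind_bindBlocks : (Q.bind fun A hA => σ ⟨A, hA⟩).fuse (Q.bindBlocks σ) = Q := by
  ext A
  simp only [fuse, bindBlocks, image_image, Function.comp_def, (σ _).sup_parts, attach_image_val]

end Bind

section FuseBind

variable (P : Finpartition a) (ρ : Finpartition P.parts)

theorem exists_restrict_fuse_parts_eq {A : α} (hA : A ∈ (P.fuse ρ).parts) :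
    ∃ B ∈ ρ.parts, (P.restrict ((P.fuse ρ).le hA)).parts = B := by
  obtain ⟨B, hB, hBA⟩ := (mem_fuse_parts P ρ).1 hA
  exact ⟨B, hB, restrict_parts_of_subset P (ρ.le hB) hBA _⟩

theorem bind_fuse_restrict : (P.fuse ρ).bind (fun _ hA => P.restrict ((P.fuse ρ).le hA)) = P := by
  ext q
  rw [mem_bind]
  constructor
  · rintro ⟨A, hA, hq⟩
    obtain ⟨B, hB, hAB⟩ := exists_restrict_fuse_parts_eq P ρ hA
    exact ρ.le hB (hAB ▸ hq)
  · intro hq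
    obtain ⟨B, hB, hqB⟩ := ρ.exists_mem hq
    refine ⟨B.sup id, (mem_fuse_parts P ρ).2 ⟨B, hB, rfl⟩, ?_⟩
    rwa [restrict_parts_of_subset P (ρ.le hB) rfl]

theorem bindBlocks_fuse_restrict_parts :
    ((P.fuse ρ).bindBlocks fun A => P.restrict ((P.fuse ρ).le A.2)).parts = ρ.parts := by
  ext B
  simp only [bindBlocks, mem_image, mem_attach, true_and, Subtype.exists]
  constructor
  · rintro ⟨A, hA, rfl⟩
    obtain ⟨B, hB, hAB⟩ := exists_restrict_fuse_parts_eq P ρ hA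
    exact hAB ▸ hB
  · intro hB
    exact ⟨B.sup id, (mem_fuse_parts P ρ).2 ⟨B, hB, rfl⟩,
      restrict_parts_of_subset P (ρ.le hB) rfl _⟩

end FuseBind

theorem heq_of_parts_eq {P P' : Finpartition a} (h : P = P') {ρ : Finpartition P.parts}
    {ρ' : Finpartition P'.parts} (hparts : ρ.parts = ρ'.parts) : HEq ρ ρ' := by
  subst h
  exact heq_of_eq (Finpartition.ext hparts)

omit [DecidableEq α] in
theorem heq_of_forall_parts_eq {Q Q' : Finpartition a} (h : Q = Q')
    {σ : ∀ A : Q.parts, Finpartition A.1} {σ' : ∀ A : Q'.parts, Finpartition A.1}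
    (hparts : ∀ A (hA : A ∈ Q.parts) (hA' : A ∈ Q'.parts),
      (σ ⟨A, hA⟩).parts = (σ' ⟨A, hA'⟩).parts) : HEq σ σ' := by
  subst h
  exact heq_of_eq (funext fun A => Finpartition.ext (hparts A.1 A.2 A.2))

def fuseEquiv :
    (Σ P : Finpartition a, Finpartition P.parts) ≃
      Σ Q : Finpartition a, ∀ A : Q.parts, Finpartition A.1 where
  toFun x := ⟨x.1.fuse x.2, fun A => x.1.restrict ((x.1.fuse x.2).le A.2)⟩
  invFun y := ⟨y.1.bind fun A hA => y.2 ⟨A, hA⟩, y.1.bindBlocks y.2⟩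
  left_inv := fun ⟨P, ρ⟩ => Sigma.ext (bind_fuse_restrict P ρ)
    (heq_of_parts_eq (bind_fuse_restrict P ρ) (bindBlocks_fuse_restrict_parts P ρ))
  right_inv := fun ⟨Q, σ⟩ => Sigma.ext (fuse_bind_bindBlocks Q σ)
    (heq_of_forall_parts_eq (fuse_bind_bindBlocks Q σ) fun A hA hA' =>
      restrict_parts_of_subset _ (fun _ hq => mem_bind.2 ⟨A, hA', hq⟩)
        (σ ⟨A, hA'⟩).sup_parts (Finpartition.le _ hA))

end DistribLattice

section Finset

variable {α : Type*} [DecidableEq α] {s : Finset α}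

theorem prod_eq_prod_parts {M : Type*} [CommMonoid M] (P : Finpartition s) (f : α → M) :
    ∏ x ∈ s, f x = ∏ q ∈ P.parts, ∏ x ∈ q, f x :=
  calc ∏ x ∈ s, f x = ∏ x ∈ P.parts.biUnion id, f x := by rw [P.biUnion_parts]
    _ = _ := prod_biUnion P.disjoint

theorem sum_sup_id_eq_sum_sum {M : Type*} [AddCommMonoid M] (P : Finpartition s)
    {B : Finset (Finset α)} (hB : B ⊆ P.parts) (f : α → M) :
    ∑ i ∈ B.sup id, f i = ∑ q ∈ B, ∑ i ∈ q, f i := by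
  rw [sup_eq_biUnion, sum_biUnion (P.disjoint.subset hB)]
  rfl

def partMap (P : Finpartition s) (x : s) : P.parts := ⟨P.part x, P.part_mem.2 x.2⟩

theorem partMap_surjective (P : Finpartition s) : Function.Surjective P.partMap := by
  rintro ⟨q, hq⟩
  obtain ⟨x, hx, hxq⟩ := P.part_surjOn hq
  exact ⟨⟨x, hx⟩, Subtype.ext hxq⟩

theorem partMap_eq_partMap_iff (P : Finpartition s) {x y : s} :
    P.partMap x = P.partMap y ↔ x.1 ∈ P.part y := by
  rw [P.mem_part_iff_part_eq_part x.2 y.2, partMap, partMap, Subtype.mk.injEq]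

theorem eq_of_partMap_eq_partMap_iff {P Q : Finpartition s}
    (h : ∀ x y, P.partMap x = P.partMap y ↔ Q.partMap x = Q.partMap y) : P = Q := by
  have hpart : ∀ x ∈ s, P.part x = Q.part x := fun x hx => by
    ext y
    by_cases hy : y ∈ s
    · have := h ⟨y, hy⟩ ⟨x, hx⟩
      rwa [partMap_eq_partMap_iff, partMap_eq_partMap_iff] at this
    · exact iff_of_false (fun h' => hy (P.part_subset x h')) (fun h' => hy (Q.part_subset x h'))
  ext q
  constructor
  · intro hq
    obtain ⟨x, hx, rfl⟩ := P.part_surjOn hq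
    exact hpart x hx ▸ Q.part_mem.2 hx
  · intro hq
    obtain ⟨x, hx, rfl⟩ := Q.part_surjOn hq
    exact (hpart x hx).symm ▸ P.part_mem.2 hx

section Fibers

variable {β : Type*} [DecidableEq β]

/-- Extending `f` by `none` off `s` makes its kernel a setoid on `α`. -/
def ofFibers (f : s → β) : Finpartition s :=
  let g (x : α) : Option β := if hx : x ∈ s then some (f ⟨x, hx⟩) else none
  letI : DecidableRel (Setoid.ker g) := fun x y => decEq (g x) (g y)
  ofSetSetoid (Setoid.ker g) s

theorem partMap_ofFibers_eq_iff (f : s → β) {x y : s} :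
    (ofFibers f).partMap x = (ofFibers f).partMap y ↔ f x = f y := by
  rw [partMap_eq_partMap_iff, ofFibers, mem_part_ofSetSetoid_iff_rel]
  simp [x.2, y.2, eq_comm]

theorem ofFibers_comp_partMap (P : Finpartition s) {e : P.parts → β} (he : e.Injective) :
    ofFibers (e ∘ P.partMap) = P :=
  eq_of_partMap_eq_partMap_iff fun _ _ => (partMap_ofFibers_eq_iff _).trans he.eq_iff

noncomputable def fiberEquivEmbedding (P : Finpartition s) :
    {f : s → β // ofFibers f = P} ≃ (P.parts ↪ β) where
  toFun f := ⟨f.1 ∘ Function.surjInv P.partMap_surjective, fun A B h => by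
    have := (partMap_ofFibers_eq_iff f.1).2 h
    rwa [f.2, Function.surjInv_eq P.partMap_surjective,
      Function.surjInv_eq P.partMap_surjective] at this⟩
  invFun e := ⟨e ∘ P.partMap, ofFibers_comp_partMap P e.injective⟩
  left_inv f := by
    ext x
    refine (partMap_ofFibers_eq_iff f.1).1 ?_
    rw [f.2, Function.surjInv_eq P.partMap_surjective]
  right_inv e := by
    ext A
    exact congrArg e (Function.surjInv_eq P.partMap_surjective A)

end Fibers

theorem sum_descFactorial_card_parts (s : Finset α) (x : ℕ) :
    ∑ P : Finpartition s, x.descFactorial #P.parts = x ^ #s := by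
  have h := Fintype.card_congr (Equiv.sigmaFiberEquiv (ofFibers : (s → Fin x) → _))
  simp only [Fintype.card_sigma, Fintype.card_congr (fiberEquivEmbedding _),
    Fintype.card_embedding_eq, Fintype.card_coe, Fintype.card_fin, Fintype.card_fun] at h
  exact h

theorem sum_eq_sum_comp_partMap {β M : Type*} [Fintype β] [AddCommMonoid M]
    (P : Finpartition s) (F : (s → β) → M)
    (hF : ∀ m, F m ≠ 0 → ∀ x y, P.partMap x = P.partMap y → m x = m y) :
    ∑ m, F m = ∑ w : P.parts → β, F (w ∘ P.partMap) := by
  refine (Fintype.sum_of_injective _ P.partMap_surjective.injective_comp_right _ F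
    (fun m hm => ?_) fun _ => rfl).symm
  by_contra hne
  refine hm ⟨m ∘ Function.surjInv P.partMap_surjective, funext fun x => hF m hne _ _ ?_⟩
  exact Function.surjInv_eq P.partMap_surjective _

end Finset

end Finpartition

theorem Finset.prod_zpow_eq_zpow_sum₀ {ι G : Type*} [CommGroupWithZero G] (s : Finset ι)
    (f : ι → ℤ) {x : G} (hx : x ≠ 0) : ∏ i ∈ s, x ^ f i = x ^ ∑ i ∈ s, f i := by
  induction s using Finset.cons_induction with
  | empty => simp
  | cons a s ha ih => rw [prod_cons, sum_cons, ih, zpow_add₀ hx]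

theorem Nat.cast_pow_eq_sum_finpartition {α K : Type*} [DecidableEq α] [Field K] [CharZero K]
    (A : Finset α) {x : ℕ} (hx : x ≠ 0) (e : ℕ) :
    (x : K) ^ e = ∑ σ : Finpartition A, (x : K) ^ ((e : ℤ) - #A) * x.descFactorial #σ.parts := by
  rw [← mul_sum, ← Nat.cast_sum, Finpartition.sum_descFactorial_card_parts, Nat.cast_pow,
    ← zpow_natCast, ← zpow_natCast, ← zpow_add₀ (Nat.cast_ne_zero.2 hx), sub_add_cancel]

theorem ne_zero_of_mem_Icc_one {v n : ℕ} (hv : v ∈ Icc 1 n) : v ≠ 0 :=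
  Nat.one_le_iff_ne_zero.1 (mem_Icc.1 hv).1

section Ensemble

variable {k : ℕ} (n : ℕ) (b : ℕ → ℝ) (c' : ℤ → ℝ) (g : Fin k → ℕ)

/-- After fusion both sides are sums of this term over clusters `A i` carrying values `w i`,
each cluster split into `κ i` blocks. -/
noncomputable def fusedTerm {ι : Type*} [Fintype ι] (A : ι → Finset (Fin k)) (κ w : ι → ℕ) : ℝ :=
  c' (n - ∑ i, (w i : ℤ)) *
    ∏ i, (b (w i) * (w i : ℝ) ^ ((∑ j ∈ A i, (g j : ℤ)) - #(A i)) *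
      ((w i).descFactorial (κ i) : ℝ))

theorem fusedTerm_comp_equiv {ι ι' : Type*} [Fintype ι] [Fintype ι'] (e : ι ≃ ι')
    (A : ι' → Finset (Fin k)) (κ w : ι' → ℕ) :
    fusedTerm n b c' g (A ∘ e) (κ ∘ e) (w ∘ e) = fusedTerm n b c' g A κ w := by
  simp only [fusedTerm, Function.comp_apply]
  rw [e.sum_comp fun i => (w i : ℤ), e.prod_comp fun i => b (w i) *
    (w i : ℝ) ^ ((∑ j ∈ A i, (g j : ℤ)) - #(A i)) * ((w i).descFactorial (κ i) : ℝ)]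

theorem mval_of_mem (p : Finpartition (univ : Finset (Fin k)))
    (m : p.parts → {v : ℕ // v ∈ Icc 1 n}) {q : Finset (Fin k)} (hq : q ∈ p.parts) :
    mval p m q = m ⟨q, hq⟩ :=
  dif_pos hq

@[to_additive]
theorem prod_mval {R : Type*} [CommMonoid R] (p : Finpartition (univ : Finset (Fin k)))
    (m : p.parts → {v : ℕ // v ∈ Icc 1 n}) (F : Finset (Fin k) → ℕ → R) :
    ∏ q ∈ p.parts, F q (mval p m q) = ∏ q : p.parts, F q (m q) := by
  rw [← prod_coe_sort]
  exact Fintype.prod_congr _ _ fun q => by rw [mval_of_mem n p m q.2]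

theorem connected_term_eq_sum_fusedTerm (P : Finpartition (univ : Finset (Fin k)))
    (M : P.parts → {v : ℕ // v ∈ Icc 1 n}) :
    c' ((n : ℤ) - ∑ q ∈ P.parts, (mval P M q : ℤ)) *
        ∏ q ∈ P.parts, (b (mval P M q) * (mval P M q : ℝ) ^ (∑ i ∈ q, g i)) =
      ∑ σ : ∀ A : P.parts, Finpartition A.1,
        fusedTerm n b c' g (fun A => A.1) (fun A => #(σ A).parts) (fun A => M A) := by
  rw [sum_mval n P M fun _ v => (v : ℤ),
    prod_mval n P M fun q v => b v * (v : ℝ) ^ (∑ i ∈ q, g i)]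
  simp only [fusedTerm, ← mul_sum]
  congr 1
  calc _ = ∏ A : P.parts, ∑ σA : Finpartition A.1, b (M A) * ((M A : ℕ) : ℝ) ^
          ((∑ j ∈ A.1, (g j : ℤ)) - #A.1) * ((M A : ℕ).descFactorial #σA.parts : ℝ) :=
        prod_congr rfl fun A _ => by
          rw [Nat.cast_pow_eq_sum_finpartition A.1 (ne_zero_of_mem_Icc_one (M A).2), mul_sum,
            Nat.cast_sum]
          simp only [mul_assoc]
    _ = _ := prod_univ_sum _ _

variable (p : Finpartition (univ : Finset (Fin k))) (ρ : Finpartition p.parts)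

theorem mval_comp_partMap (w : ρ.parts → {v : ℕ // v ∈ Icc 1 n}) {B : Finset (Finset (Fin k))}
    (hB : B ∈ ρ.parts) {q : Finset (Fin k)} (hq : q ∈ B) :
    mval p (w ∘ ρ.partMap) q = w ⟨B, hB⟩ := by
  rw [mval_of_mem n p _ (ρ.le hB hq)]
  simp only [Function.comp_apply, Finpartition.partMap, ρ.part_eq_of_mem hB hq]

theorem ensemble_term_comp_partMap (w : ρ.parts → {v : ℕ // v ∈ Icc 1 n}) :
    c' ((n : ℤ) - ∑ B ∈ ρ.parts, ((B.sup (mval p (w ∘ ρ.partMap)) : ℕ) : ℤ)) *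
        (∏ B ∈ ρ.parts,
          ((if ∀ q ∈ B, ∀ q' ∈ B, mval p (w ∘ ρ.partMap) q = mval p (w ∘ ρ.partMap) q'
              then (1 : ℝ) else 0) *
            b (B.sup (mval p (w ∘ ρ.partMap))) *
            (Nat.descFactorial (B.sup (mval p (w ∘ ρ.partMap))) B.card : ℝ))) *
        ∏ q ∈ p.parts, ((mval p (w ∘ ρ.partMap) q : ℝ)) ^ ((∑ i ∈ q, (g i : ℤ)) - (q.card : ℤ)) =
      fusedTerm n b c' g (fun B : ρ.parts => B.1.sup id) (fun B => #B.1) (fun B => w B) := by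
  have hsup (B : ρ.parts) : B.1.sup (mval p (w ∘ ρ.partMap)) = w B := by
    rw [sup_congr rfl fun q hq => mval_comp_partMap n p ρ w B.2 hq,
      sup_const (ρ.nonempty_of_mem_parts B.2)]
  have hexp (B : ρ.parts) : ∑ q ∈ B.1, ((∑ i ∈ q, (g i : ℤ)) - #q) =
      (∑ i ∈ B.1.sup id, (g i : ℤ)) - #(B.1.sup id) := by
    rw [sum_sub_distrib, p.sum_sup_id_eq_sum_sum (ρ.le B.2), card_eq_sum_ones,
      p.sum_sup_id_eq_sum_sum (ρ.le B.2), Nat.cast_sum]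
    simp only [← card_eq_sum_ones]
  have hparts : ∏ q ∈ p.parts, ((mval p (w ∘ ρ.partMap) q : ℝ)) ^ ((∑ i ∈ q, (g i : ℤ)) - #q) =
      ∏ B : ρ.parts, ((w B : ℕ) : ℝ) ^ ((∑ i ∈ B.1.sup id, (g i : ℤ)) - #(B.1.sup id)) := by
    rw [ρ.prod_eq_prod_parts, ← prod_coe_sort]
    refine Fintype.prod_congr _ _ fun B => ?_
    rw [prod_congr rfl fun q hq => by rw [mval_comp_partMap n p ρ w B.2 hq],
      prod_zpow_eq_zpow_sum₀ _ _ (Nat.cast_ne_zero.2 (ne_zero_of_mem_Icc_one (w B).2)), hexp]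
  rw [hparts, ← sum_coe_sort, ← prod_coe_sort, mul_assoc, ← prod_mul_distrib]
  unfold fusedTerm
  refine congr_arg₂ _ (by simp only [hsup]) (Fintype.prod_congr _ _ fun B => ?_)
  have hconst : ∀ q ∈ B.1, ∀ q' ∈ B.1, mval p (w ∘ ρ.partMap) q = mval p (w ∘ ρ.partMap) q' :=
    fun q hq q' hq' => by rw [mval_comp_partMap n p ρ w B.2 hq, mval_comp_partMap n p ρ w B.2 hq']
  rw [if_pos hconst, hsup]
  ring

theorem sum_ensemble_term_eq_sum_fusedTerm :
    ∑ m : p.parts → {v : ℕ // v ∈ Icc 1 n},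
      c' ((n : ℤ) - ∑ B ∈ ρ.parts, ((B.sup (mval p m) : ℕ) : ℤ)) *
        (∏ B ∈ ρ.parts,
          ((if ∀ q ∈ B, ∀ q' ∈ B, mval p m q = mval p m q' then (1 : ℝ) else 0) *
            b (B.sup (mval p m)) * (Nat.descFactorial (B.sup (mval p m)) B.card : ℝ))) *
        ∏ q ∈ p.parts, ((mval p m q : ℝ)) ^ ((∑ i ∈ q, (g i : ℤ)) - (q.card : ℤ)) =
      ∑ M : (p.fuse ρ).parts → {v : ℕ // v ∈ Icc 1 n},
        fusedTerm n b c' g (fun A => A.1) (fun A => #(p.restrict ((p.fuse ρ).le A.2)).parts)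
          (fun A => M A) := by
  rw [ρ.sum_eq_sum_comp_partMap _ fun m hm x y hxy => ?vanish]
  case vanish =>
    have hfactor := prod_ne_zero_iff.1 (right_ne_zero_of_mul (left_ne_zero_of_mul hm)) _
      (ρ.part_mem.2 x.2)
    have hconst : ∀ q ∈ ρ.part x, ∀ q' ∈ ρ.part x, mval p m q = mval p m q' := by
      by_contra h
      exact hfactor (by rw [if_neg h, zero_mul, zero_mul])
    have hy : y.1 ∈ ρ.part x := by
      rw [show ρ.part x = ρ.part y from congrArg Subtype.val hxy]
      exact ρ.mem_part y.2
    have := hconst x (ρ.mem_part x.2) y hy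
    rw [mval_of_mem n p m x.2, mval_of_mem n p m y.2] at this
    exact Subtype.ext this
  refine (Fintype.sum_equiv ((p.fusePartsEquiv ρ).symm.arrowCongr (Equiv.refl _)) _ _
    fun M => ?_).symm
  rw [ensemble_term_comp_partMap, ← fusedTerm_comp_equiv n b c' g (p.fusePartsEquiv ρ)]
  congr 1
  funext B
  exact congrArg card (p.restrict_parts_of_subset (ρ.le B.2) rfl _)

end Ensemble

theorem connected_sum_side_eq_ensemble_side_general
    (b : ℕ → ℝ)
    (c' : ℤ → ℝ)
    (k n : ℕ) (g : Fin k → ℕ) :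
    ∑ p : Finpartition (Finset.univ : Finset (Fin k)),
      ∑ m : {q // q ∈ p.parts} → {v : ℕ // v ∈ Finset.Icc 1 n},
        c' ((n : ℤ) - ∑ q ∈ p.parts, (mval p m q : ℤ)) *
          ∏ q ∈ p.parts, (b (mval p m q) * (mval p m q : ℝ) ^ (∑ i ∈ q, g i)) =
    ∑ p : Finpartition (Finset.univ : Finset (Fin k)),
      ∑ m : {q // q ∈ p.parts} → {v : ℕ // v ∈ Finset.Icc 1 n},
        (∑ ρ : Finpartition p.parts,
            c' ((n : ℤ) - ∑ B ∈ ρ.parts, ((B.sup (mval p m) : ℕ) : ℤ)) *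
              ∏ B ∈ ρ.parts,
                ((if ∀ q ∈ B, ∀ q' ∈ B, mval p m q = mval p m q' then (1 : ℝ) else 0) *
                  b (B.sup (mval p m)) *
                  (Nat.descFactorial (B.sup (mval p m)) B.card : ℝ))) *
          ∏ q ∈ p.parts, ((mval p m q : ℝ)) ^ ((∑ i ∈ q, (g i : ℤ)) - (q.card : ℤ)) := by
  calc _ = ∑ y : Σ Q : Finpartition (univ : Finset (Fin k)), ∀ A : Q.parts, Finpartition A.1,
        ∑ M : y.1.parts → {v : ℕ // v ∈ Icc 1 n},
          fusedTerm n b c' g (fun A => A.1) (fun A => #(y.2 A).parts) (fun A => M A) := by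
        rw [Fintype.sum_sigma]
        refine sum_congr rfl fun Q _ => ?_
        simp_rw [connected_term_eq_sum_fusedTerm]
        exact sum_comm
    _ = ∑ x : Σ p : Finpartition (univ : Finset (Fin k)), Finpartition p.parts,
        ∑ M : (x.1.fuse x.2).parts → {v : ℕ // v ∈ Icc 1 n},
          fusedTerm n b c' g (fun A => A.1)
            (fun A => #(x.1.restrict ((x.1.fuse x.2).le A.2)).parts) (fun A => M A) :=
        (Fintype.sum_equiv Finpartition.fuseEquiv _ _ fun _ => rfl).symm
    _ = _ := by
        rw [Fintype.sum_sigma]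
        refine sum_congr rfl fun p _ => ?_
        simp_rw [sum_mul]
        rw [sum_comm]
        exact sum_congr rfl fun ρ _ => (sum_ensemble_term_eq_sum_fusedTerm n b c' g p ρ).symm

theorem connected_sum_side_eq_ensemble_side
    (b : ℕ → ℝ) (c : ℕ → ℝ)
    (c' : ℤ → ℝ) (hc'nat : ∀ j : ℕ, c' j = c j) (hc'neg : ∀ j : ℤ, j < 0 → c' j = 0)
    (k n : ℕ) (g : Fin k → ℕ) :
    ∑ p : Finpartition (Finset.univ : Finset (Fin k)),
      ∑ m : {q // q ∈ p.parts} → {v : ℕ // v ∈ Finset.Icc 1 n},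
        c' ((n : ℤ) - ∑ q ∈ p.parts, (mval p m q : ℤ)) *
          ∏ q ∈ p.parts, (b (mval p m q) * (mval p m q : ℝ) ^ (∑ i ∈ q, g i)) =
    ∑ p : Finpartition (Finset.univ : Finset (Fin k)),
      ∑ m : {q // q ∈ p.parts} → {v : ℕ // v ∈ Finset.Icc 1 n},
        (∑ ρ : Finpartition p.parts,
            c' ((n : ℤ) - ∑ B ∈ ρ.parts, ((B.sup (mval p m) : ℕ) : ℤ)) *
              ∏ B ∈ ρ.parts,
                ((if ∀ q ∈ B, ∀ q' ∈ B, mval p m q = mval p m q' then (1 : ℝ) else 0) *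
                  b (B.sup (mval p m)) *
                  (Nat.descFactorial (B.sup (mval p m)) B.card : ℝ))) *
          ∏ q ∈ p.parts, ((mval p m q : ℝ)) ^ ((∑ i ∈ q, (g i : ℤ)) - (q.card : ℤ)) :=
  connected_sum_side_eq_ensemble_side_general b c' k n g
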